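/- arXiv:2405.18283 — 2 statements merged into one kernel-verified Lean document; each statement's English description precedes it below -/
import Mathlib

section
/- For z ∈ (−π/4, π/4), define φ_C(z) := (Γ(1/4)²/(4√π)) · ₂F₁(−1/2, 3/2; 1; (cos z − sin z)²/2). Then φ_C solves the ODE φ'' − 2 tan(2z) φ' + 3φ = 0 on (−π/4, π/4). -/
/-!
With `x = (cos z - sin z)² / 2 = (1 - sin 2z) / 2` one has `dx/dz = -cos 2z`,
`cos² 2z = 4x(1 - x)` and `sin 2z = 1 - 2x`, so the operator `d²/dz² - 2 tan(2z) d/dz` becomes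
`4 (x(1 - x) d²/dx² + (1 - 2x) d/dx)`: the Jacobi equation is four times the hypergeometric
equation `x(1 - x)F'' + (c - (a + b + 1)x)F' - abF = 0` with `a = -1/2`, `b = 3/2`, `c = 1`.
That equation holds on the unit disc because the Taylor coefficients `Cₙ` of `₂F₁(a, b; c; x)` obey
`(n + 1)(n + c) Cₙ₊₁ = (n + a)(n + b) Cₙ`, and the series may be differentiated termwise, the
derivative of `₂F₁(a, b; c; ·)` being `(ab/c) ₂F₁(a + 1, b + 1; c + 1; ·)`.
-/

open Real

/-- The rotationally invariant Jacobi field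
`φ_C(z) = (Γ(1/4)²/(4√π)) · ₂F₁(−1/2, 3/2; 1; (cos z − sin z)²/2)` on `S³`. -/
noncomputable def phiC (z : ℝ) : ℝ :=
  (Real.Gamma (1/4))^2 / (4 * Real.sqrt π) *
    (₂F₁ (-(1/2) : ℝ) (3/2) 1 ((Real.cos z - Real.sin z)^2 / 2) : ℝ)

open Topology

section PowerSeries

variable {𝕜 : Type*} [RCLike 𝕜]

theorem HasSum.natCast_mul_mul_pow {f : ℕ → 𝕜} {x s : 𝕜}
    (h : HasSum (fun n : ℕ => ((n : 𝕜) + 1) * f (n + 1) * x ^ n) s) :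
    HasSum (fun n : ℕ => (n : 𝕜) * f n * x ^ n) (x * s) := by
  have h' := HasSum.zero_add (f := fun n : ℕ => (n : 𝕜) * f n * x ^ n)
    ((h.mul_left x).congr_fun fun n => by push_cast; ring)
  simpa using h'

theorem hasDerivAt_tsum_mul_pow {a : ℕ → 𝕜} {R : ℝ}
    (ha : ∀ y : 𝕜, ‖y‖ < R → Summable fun n : ℕ => ((n : 𝕜) + 1) * a (n + 1) * y ^ n)
    {x : 𝕜} (hx : ‖x‖ < R) :
    HasDerivAt (fun y => ∑' n : ℕ, a n * y ^ n)
      (∑' n : ℕ, ((n : 𝕜) + 1) * a (n + 1) * x ^ n) x := by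
  obtain ⟨r, hxr, hrR⟩ := exists_between hx
  have hr : 0 < r := (norm_nonneg x).trans_lt hxr
  have hu : Summable fun n : ℕ => ‖a n‖ * n * r ^ (n - 1) := by
    rw [← summable_nat_add_iff 1]
    refine (summable_norm_iff.2 (ha r (by simpa [abs_of_pos hr] using hrR))).congr fun n => ?_
    rw [norm_mul, norm_mul, norm_pow, RCLike.norm_ofReal, abs_of_pos hr,
      show ((n : 𝕜) + 1) = ((n + 1 : ℕ) : 𝕜) by push_cast; ring, RCLike.norm_natCast,
      Nat.add_sub_cancel]
    ring
  have hbound : ∀ n (y : 𝕜), y ∈ Metric.ball 0 r →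
      ‖a n * ((n : 𝕜) * y ^ (n - 1))‖ ≤ ‖a n‖ * n * r ^ (n - 1) := by
    intro n y hy
    rw [mem_ball_zero_iff] at hy
    rw [norm_mul, norm_mul, norm_pow, RCLike.norm_natCast, mul_assoc]
    gcongr
  have hsum0 : Summable fun n : ℕ => a n * (0 : 𝕜) ^ n := by
    rw [← summable_nat_add_iff 1]
    simp
  have hderiv := HasSum.zero_add (f := fun n : ℕ => a n * ((n : 𝕜) * x ^ (n - 1)))
    ((ha x hx).hasSum.congr_fun fun n => by push_cast; ring)
  simp only [CharP.cast_eq_zero, zero_mul, mul_zero, zero_add] at hderiv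
  exact (hasDerivAt_tsum_of_isPreconnected hu Metric.isOpen_ball
    (convex_ball 0 r).isPreconnected (fun n y _ => (hasDerivAt_pow n y).const_mul (a n))
    hbound (Metric.mem_ball_self hr) hsum0 (mem_ball_zero_iff.2 hxr)).congr_deriv hderiv.tsum_eq

end PowerSeries

section Hypergeometric

open Polynomial

theorem ordinaryHypergeometricCoefficient_succ_mul {𝕂 : Type*} [Field 𝕂] [CharZero 𝕂]
    (a b c : 𝕂) (n : ℕ) :
    ((n : 𝕂) + 1) * ordinaryHypergeometricCoefficient a b c (n + 1) =
      a * b / c * ordinaryHypergeometricCoefficient (a + 1) (b + 1) (c + 1) n := by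
  have hn : (n : 𝕂) + 1 ≠ 0 := by exact_mod_cast n.succ_ne_zero
  simp only [ordinaryHypergeometricCoefficient, ascPochhammer_succ_left, eval_mul, eval_X,
    eval_comp, eval_add, eval_one, Nat.factorial_succ, Nat.cast_mul, Nat.cast_succ, mul_inv]
  linear_combination (ascPochhammer 𝕂 n).eval (a + 1) * (ascPochhammer 𝕂 n).eval (b + 1) *
    ((ascPochhammer 𝕂 n).eval (c + 1))⁻¹ * (n.factorial : 𝕂)⁻¹ * a * b * c⁻¹ * mul_inv_cancel₀ hn

theorem ordinaryHypergeometricCoefficient_recurrence {𝕂 : Type*} [Field 𝕂] [CharZero 𝕂]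
    (a b : 𝕂) {c : 𝕂} {n : ℕ} (hc : c + n ≠ 0) :
    ((n : 𝕂) + 1) * (n + c) * ordinaryHypergeometricCoefficient a b c (n + 1) =
      (n + a) * (n + b) * ordinaryHypergeometricCoefficient a b c n := by
  have hn : (n : 𝕂) + 1 ≠ 0 := by exact_mod_cast n.succ_ne_zero
  simp only [ordinaryHypergeometricCoefficient, ascPochhammer_succ_eval, Nat.factorial_succ,
    Nat.cast_mul, Nat.cast_succ, mul_inv]
  linear_combination (n.factorial : 𝕂)⁻¹ * (ascPochhammer 𝕂 n).eval a * (ascPochhammer 𝕂 n).eval b *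
    ((ascPochhammer 𝕂 n).eval c)⁻¹ * (a + n) * (b + n) *
    ((c + n) * (c + n)⁻¹ * mul_inv_cancel₀ hn + mul_inv_cancel₀ hc)

theorem one_le_radius_ordinaryHypergeometricSeries {𝕂 : Type*} (𝔸 : Type*) [RCLike 𝕂]
    [NormedDivisionRing 𝔸] [NormedAlgebra 𝕂 𝔸] (a b c : 𝕂) :
    1 ≤ (ordinaryHypergeometricSeries 𝔸 a b c).radius := by
  by_cases h : ∃ k : ℕ, (k : 𝕂) = -a ∨ (k : 𝕂) = -b ∨ (k : 𝕂) = -c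
  · obtain ⟨k, rfl | rfl | rfl⟩ : ∃ k : ℕ, a = -k ∨ b = -k ∨ c = -k := by
      obtain ⟨k, hk⟩ := h
      exact ⟨k, by rcases hk with hk | hk | hk <;> simp [hk]⟩
    · simp [ordinaryHypergeometric_radius_top_of_neg_nat₁]
    · simp [ordinaryHypergeometric_radius_top_of_neg_nat₂]
    · simp [ordinaryHypergeometric_radius_top_of_neg_nat₃]
  · push Not at h
    rw [ordinaryHypergeometricSeries_radius_eq_one 𝔸 a b c h]

variable {𝕜 : Type*} [RCLike 𝕜]

theorem hasSum_ordinaryHypergeometric (a b c : 𝕜) {x : 𝕜} (hx : ‖x‖ < 1) :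
    HasSum (fun n => ordinaryHypergeometricCoefficient a b c n * x ^ n) (₂F₁ a b c x) := by
  have hmem : x ∈ Metric.eball (0 : 𝕜) (ordinaryHypergeometricSeries 𝕜 a b c).radius := by
    refine mem_eball_zero_iff.2
      (lt_of_lt_of_le ?_ (one_le_radius_ordinaryHypergeometricSeries 𝕜 a b c))
    rw [← ofReal_norm]
    exact ENNReal.ofReal_lt_one.2 hx
  have := ((ordinaryHypergeometricSeries 𝕜 a b c).summable_norm_apply hmem).of_norm.hasSum
  rw [ordinaryHypergeometric_eq_tsum]
  simpa only [ordinaryHypergeometricSeries_apply_eq, smul_eq_mul] using this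

theorem hasSum_succ_mul_ordinaryHypergeometricCoefficient (a b c : 𝕜) {x : 𝕜} (hx : ‖x‖ < 1) :
    HasSum (fun n : ℕ => ((n : 𝕜) + 1) * ordinaryHypergeometricCoefficient a b c (n + 1) * x ^ n)
      (a * b / c * ₂F₁ (a + 1) (b + 1) (c + 1) x) :=
  ((hasSum_ordinaryHypergeometric _ _ _ hx).mul_left (a * b / c)).congr_fun fun n => by
    rw [ordinaryHypergeometricCoefficient_succ_mul]; ring

theorem hasDerivAt_ordinaryHypergeometric (a b c : 𝕜) {x : 𝕜} (hx : ‖x‖ < 1) :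
    HasDerivAt (₂F₁ a b c) (a * b / c * ₂F₁ (a + 1) (b + 1) (c + 1) x) x := by
  have hF : ₂F₁ a b c = fun y => ∑' n : ℕ, ordinaryHypergeometricCoefficient a b c n * y ^ n := by
    rw [ordinaryHypergeometric_eq_tsum]
    simp only [smul_eq_mul]
  rw [hF, ← (hasSum_succ_mul_ordinaryHypergeometricCoefficient a b c hx).tsum_eq]
  exact hasDerivAt_tsum_mul_pow
    (fun y hy => (hasSum_succ_mul_ordinaryHypergeometricCoefficient a b c hy).summable) hx

theorem deriv_ordinaryHypergeometric_eventuallyEq (a b c : 𝕜) {x : 𝕜} (hx : ‖x‖ < 1) :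
    deriv (₂F₁ a b c) =ᶠ[𝓝 x] fun y => a * b / c * ₂F₁ (a + 1) (b + 1) (c + 1) y := by
  filter_upwards [Metric.isOpen_ball.mem_nhds (mem_ball_zero_iff.2 hx)] with y hy
  exact (hasDerivAt_ordinaryHypergeometric a b c (mem_ball_zero_iff.1 hy)).deriv

theorem hasDerivAt_deriv_ordinaryHypergeometric (a b c : 𝕜) {x : 𝕜} (hx : ‖x‖ < 1) :
    HasDerivAt (deriv (₂F₁ a b c)) (a * b / c * ((a + 1) * (b + 1) / (c + 1) *
      ₂F₁ (a + 1 + 1) (b + 1 + 1) (c + 1 + 1) x)) x :=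
  ((hasDerivAt_ordinaryHypergeometric _ _ _ hx).const_mul _).congr_of_eventuallyEq
    (deriv_ordinaryHypergeometric_eventuallyEq a b c hx)

theorem ordinaryHypergeometric_ode (a b : 𝕜) {c : 𝕜} (hc : ∀ n : ℕ, c + n ≠ 0) {x : 𝕜}
    (hx : ‖x‖ < 1) :
    x * (1 - x) * deriv (deriv (₂F₁ a b c)) x + (c - (a + b + 1) * x) * deriv (₂F₁ a b c) x
      - a * b * ₂F₁ a b c x = 0 := by
  set C := ordinaryHypergeometricCoefficient a b c
  set d : ℕ → 𝕜 := fun n => ((n : 𝕜) + 1) * C (n + 1)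
  have hF : HasSum (fun n => C n * x ^ n) (₂F₁ a b c x) := hasSum_ordinaryHypergeometric a b c hx
  have hF' : HasSum (fun n => d n * x ^ n) (deriv (₂F₁ a b c) x) := by
    rw [(hasDerivAt_ordinaryHypergeometric a b c hx).deriv]
    exact hasSum_succ_mul_ordinaryHypergeometricCoefficient a b c hx
  have hF'' : HasSum (fun n : ℕ => ((n : 𝕜) + 1) * d (n + 1) * x ^ n)
      (deriv (deriv (₂F₁ a b c)) x) := by
    rw [(hasDerivAt_deriv_ordinaryHypergeometric a b c hx).deriv]
    refine ((hasSum_succ_mul_ordinaryHypergeometricCoefficient _ _ _ hx).mul_left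
      (a * b / c)).congr_fun fun n => ?_
    have := ordinaryHypergeometricCoefficient_succ_mul a b c (n + 1)
    push_cast at this
    simp only [d, C]
    push_cast
    linear_combination ((n : 𝕜) + 1) * x ^ n * this
  -- The left side is `(xF'' + cF') - x(xF'' + (a + b + 1)F') - abF`, and multiplying a series
  -- by `x` shifts its coefficients; the resulting coefficients cancel by the recurrence.
  have hxF'' := hF''.natCast_mul_mul_pow
  have hxxF := HasSum.natCast_mul_mul_pow (f := fun n => (n + a + b) * C n) (x := x)
    ((hxF''.add (hF'.mul_left (a + b + 1))).congr_fun fun n => by simp only [d]; push_cast; ring)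
  have hsum := ((hxF''.add (hF'.mul_left c)).sub hxxF).sub (hF.mul_left (a * b))
  have hzero : ∀ n : ℕ, (n : 𝕜) * d n * x ^ n + c * (d n * x ^ n) -
      (n : 𝕜) * ((n + a + b) * C n) * x ^ n - a * b * (C n * x ^ n) = 0 := fun n => by
    linear_combination x ^ n * ordinaryHypergeometricCoefficient_recurrence a b (hc n)
  linear_combination hsum.unique (hasSum_zero.congr_fun hzero)

end Hypergeometric

section JacobiField

open Real

theorem hasDerivAt_cos_sub_sin_sq_div_two (z : ℝ) :
    HasDerivAt (fun z => (cos z - sin z) ^ 2 / 2) (-cos (2 * z)) z :=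
  (((hasDerivAt_cos z).sub (hasDerivAt_sin z)).pow 2).div_const 2 |>.congr_deriv <| by
    rw [cos_two_mul', Pi.sub_apply]; ring

theorem hasDerivAt_neg_cos_two_mul (z : ℝ) :
    HasDerivAt (fun z => -cos (2 * z)) (2 * sin (2 * z)) z :=
  (((hasDerivAt_id' z).const_mul 2).cos.neg).congr_deriv (by ring)

theorem sin_two_mul_eq_one_sub_cos_sub_sin_sq (z : ℝ) :
    sin (2 * z) = 1 - 2 * ((cos z - sin z) ^ 2 / 2) := by
  linear_combination sin_two_mul z + sin_sq_add_cos_sq z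

theorem abs_cos_sub_sin_sq_div_two_lt_one {z : ℝ} (hz : cos (2 * z) ≠ 0) :
    |(cos z - sin z) ^ 2 / 2| < 1 := by
  have hsin : sin (2 * z) ^ 2 < 1 := by
    nlinarith [sin_sq_add_cos_sq (2 * z), pow_pos (abs_pos.2 hz) 2, sq_abs (cos (2 * z))]
  rw [abs_lt]
  constructor <;> nlinarith [sin_two_mul_eq_one_sub_cos_sub_sin_sq z]

noncomputable def hypergeometricProfile (a b z : ℝ) : ℝ :=
  ₂F₁ a b (1 : ℝ) ((cos z - sin z) ^ 2 / 2)

variable {a b : ℝ}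

theorem hasDerivAt_hypergeometricProfile {z : ℝ} (hz : cos (2 * z) ≠ 0) :
    HasDerivAt (hypergeometricProfile a b)
      (deriv (₂F₁ a b 1 : ℝ → ℝ) ((cos z - sin z) ^ 2 / 2) * -cos (2 * z)) z :=
  (hasDerivAt_ordinaryHypergeometric a b 1
    (abs_cos_sub_sin_sq_div_two_lt_one hz)).differentiableAt.hasDerivAt.comp z
    (hasDerivAt_cos_sub_sin_sq_div_two z)

theorem hasDerivAt_deriv_hypergeometricProfile {z : ℝ} (hz : cos (2 * z) ≠ 0) :
    HasDerivAt (deriv (hypergeometricProfile a b))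
      (deriv (deriv (₂F₁ a b 1 : ℝ → ℝ)) ((cos z - sin z) ^ 2 / 2) * cos (2 * z) ^ 2 +
        deriv (₂F₁ a b 1 : ℝ → ℝ) ((cos z - sin z) ^ 2 / 2) * (2 * sin (2 * z))) z := by
  have hF' := (hasDerivAt_deriv_ordinaryHypergeometric a b 1
    (abs_cos_sub_sin_sq_div_two_lt_one hz)).differentiableAt.hasDerivAt
  refine (((hF'.comp z (hasDerivAt_cos_sub_sin_sq_div_two z)).mul
    (hasDerivAt_neg_cos_two_mul z)).congr_deriv (by rw [Function.comp_apply]; ring))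
    |>.congr_of_eventuallyEq ?_
  have hcont : Continuous fun w : ℝ => cos (2 * w) := by fun_prop
  have hnhds : ∀ᶠ w in 𝓝 z, cos (2 * w) ≠ 0 := hcont.continuousAt.eventually_ne hz
  filter_upwards [hnhds] with w hw
  exact (hasDerivAt_hypergeometricProfile hw).deriv

theorem hypergeometricProfile_ode (hab : a + b = 1) {z : ℝ} (hz : cos (2 * z) ≠ 0) :
    deriv (deriv (hypergeometricProfile a b)) z
      - 2 * tan (2 * z) * deriv (hypergeometricProfile a b) z
      - 4 * a * b * hypergeometricProfile a b z = 0 := by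
  have hode := ordinaryHypergeometric_ode a b (c := (1 : ℝ)) (fun n => by positivity)
    (abs_cos_sub_sin_sq_div_two_lt_one hz)
  rw [(hasDerivAt_deriv_hypergeometricProfile hz).deriv,
    (hasDerivAt_hypergeometricProfile hz).deriv]
  set F : ℝ → ℝ := ₂F₁ a b 1
  set x := (cos z - sin z) ^ 2 / 2
  have hsin : sin (2 * z) = 1 - 2 * x := sin_two_mul_eq_one_sub_cos_sub_sin_sq z
  have htan : tan (2 * z) * cos (2 * z) = sin (2 * z) := by
    rw [tan_eq_sin_div_cos, div_mul_cancel₀ _ hz]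
  rw [show hypergeometricProfile a b z = F x from rfl]
  linear_combination deriv (deriv F) x * (cos_sq_add_sin_sq (2 * z) -
    (sin (2 * z) + 1 - 2 * x) * hsin) + 2 * deriv F x * htan + 4 * deriv F x * hsin +
    4 * hode + 4 * x * deriv F x * hab

end JacobiField

/-- `φ_C` solves the rotationally invariant Jacobi equation
`φ'' − 2 tan(2z) φ' + 3φ = 0` on `(−π/4, π/4)`. -/
theorem stmt2 :
    ∀ z ∈ Set.Ioo (-(π/4)) (π/4),
      deriv (deriv phiC) z - 2 * Real.tan (2*z) * deriv phiC z + 3 * phiC z = 0 := by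
  intro z hz
  have hcos : cos (2 * z) ≠ 0 := (cos_pos_of_mem_Ioo ⟨by linarith [hz.1], by linarith [hz.2]⟩).ne'
  have hphiC : phiC = fun w => (Real.Gamma (1/4))^2 / (4 * Real.sqrt π) *
      hypergeometricProfile (-(1/2)) (3/2) w := rfl
  rw [hphiC, deriv_const_mul_field', deriv_const_mul_field']
  linear_combination (Real.Gamma (1/4))^2 / (4 * Real.sqrt π) *
    hypergeometricProfile_ode (a := -(1/2)) (b := 3/2) (by norm_num) hcos
end

section
/- The constant F₀ := Γ(1/4)⁴/(8π²) satisfies 2.18 < F₀ < 2.19. -/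
/-!
Log-convexity of `Γ` (Wendel's inequality) squeezes `Γ(n + 1/4)` between `n!` and `(n - 1)!`
up to factors `n ^ (1/4)` and `(n + 1/4) ^ (3/4)`, while `Γ(n + 1/4) · 4ⁿ = Γ(1/4) ∏_{k<n} (4k + 1)`.
This traps `Γ(1/4)⁴` in an interval of relative width about `3/(4n)` whose endpoints are rational
numbers; `n = 600` already separates it from `2.18 · 8π²` and `2.19 · 8π²`, given `π` to six decimals.
-/

open Real Finset Nat

namespace Real

theorem Gamma_add_le_Gamma_mul_rpow {x s : ℝ} (hx : 0 < x) (hs₀ : 0 < s) (hs₁ : s < 1) :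
    Gamma (x + s) ≤ Gamma x * x ^ s := by
  have hΓ := Gamma_pos_of_pos hx
  have h := Gamma_mul_add_mul_le_rpow_Gamma_mul_rpow_Gamma (t := x + 1) hx (by linarith)
    (sub_pos.2 hs₁) hs₀ (sub_add_cancel 1 s)
  rw [show (1 - s) * x + s * (x + 1) = x + s by ring, Gamma_add_one hx.ne'] at h
  calc Gamma (x + s) ≤ Gamma x ^ (1 - s) * (x * Gamma x) ^ s := h
    _ = Gamma x * x ^ s := by
      rw [mul_rpow hx.le hΓ.le, mul_left_comm, ← rpow_add hΓ, sub_add_cancel, rpow_one, mul_comm]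

theorem Gamma_add_div_pow_le {x : ℝ} (hx : 0 < x) {k m : ℕ} (hk : 0 < k) (hkm : k < m) :
    Gamma (x + k / m) ^ m ≤ Gamma x ^ m * x ^ k := by
  have hm : (0 : ℝ) < m := by exact_mod_cast hk.trans hkm
  have h := Gamma_add_le_Gamma_mul_rpow hx (s := k / m) (by positivity)
    ((div_lt_one hm).2 (by exact_mod_cast hkm))
  calc Gamma (x + k / m) ^ m ≤ (Gamma x * x ^ ((k : ℝ) / m)) ^ m :=
        pow_le_pow_left₀ (Gamma_pos_of_pos (by positivity)).le h m
    _ = Gamma x ^ m * x ^ k := by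
      rw [mul_pow, ← rpow_mul_natCast hx.le, div_mul_cancel₀ _ hm.ne', rpow_natCast]

theorem Gamma_add_nat_eq_mul_prod {x : ℝ} (hx : ∀ k : ℕ, x + k ≠ 0) (n : ℕ) :
    Gamma (x + n) = Gamma x * ∏ k ∈ range n, (x + k) := by
  induction n with
  | zero => simp
  | succ n ih =>
    rw [prod_range_succ, ← mul_assoc, ← ih, mul_comm, Nat.cast_succ, ← add_assoc,
      Gamma_add_one (hx n)]

end Real

/-- `4ⁿ` times the rising factorial `(1/4)ₙ`. -/
def quarterPochhammer (n : ℕ) : ℕ := ∏ k ∈ range n, (4 * k + 1)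

theorem Gamma_one_div_four_add_nat_mul_four_pow (n : ℕ) :
    Gamma (1 / 4 + n) * 4 ^ n = Gamma (1 / 4) * quarterPochhammer n := by
  have hne : ∀ k : ℕ, (1 / 4 : ℝ) + k ≠ 0 := fun k => by positivity
  rw [Gamma_add_nat_eq_mul_prod hne, mul_assoc, quarterPochhammer, Nat.cast_prod,
    show (4 : ℝ) ^ n = ∏ _k ∈ range n, (4 : ℝ) by simp, ← prod_mul_distrib]
  exact congrArg _ (prod_congr rfl fun k _ => by push_cast; ring)

theorem le_Gamma_one_div_four_pow_four_mul (n : ℕ) :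
    (((n ! * 4 ^ n) ^ 4 * 64 : ℕ) : ℝ)
      ≤ Gamma (1 / 4) ^ 4 * ((quarterPochhammer n ^ 4 * (4 * n + 1) ^ 3 : ℕ) : ℝ) := by
  have h := Gamma_add_div_pow_le (x := n + 1 / 4) (k := 3) (m := 4) (by positivity) (by norm_num)
    (by norm_num)
  rw [show (n : ℝ) + 1 / 4 + (3 : ℕ) / (4 : ℕ) = n + 1 by push_cast; ring,
    Gamma_nat_eq_factorial] at h
  have key := Gamma_one_div_four_add_nat_mul_four_pow n
  rw [add_comm] at key
  calc (((n ! * 4 ^ n) ^ 4 * 64 : ℕ) : ℝ) = (n ! : ℝ) ^ 4 * ((4 : ℝ) ^ n) ^ 4 * 64 := by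
        push_cast; ring
    _ ≤ Gamma (n + 1 / 4) ^ 4 * (n + 1 / 4) ^ 3 * ((4 : ℝ) ^ n) ^ 4 * 64 := by gcongr
    _ = (Gamma (n + 1 / 4) * 4 ^ n) ^ 4 * (4 * n + 1) ^ 3 := by ring
    _ = _ := by rw [key]; push_cast; ring

theorem Gamma_one_div_four_pow_four_mul_le (n : ℕ) :
    Gamma (1 / 4) ^ 4 * ((quarterPochhammer (n + 1) ^ 4 : ℕ) : ℝ)
      ≤ (((n ! * 4 ^ (n + 1)) ^ 4 * (n + 1) : ℕ) : ℝ) := by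
  have h := Gamma_add_div_pow_le (x := n + 1) (k := 1) (m := 4) (by positivity) (by norm_num)
    (by norm_num)
  rw [Gamma_nat_eq_factorial] at h
  have key := Gamma_one_div_four_add_nat_mul_four_pow (n + 1)
  rw [add_comm] at key
  push_cast at h key ⊢
  rw [pow_one] at h
  calc Gamma (1 / 4) ^ 4 * (quarterPochhammer (n + 1) : ℝ) ^ 4
      = (Gamma (n + 1 + 1 / 4) * 4 ^ (n + 1)) ^ 4 := by rw [key]; ring
    _ = Gamma (n + 1 + 1 / 4) ^ 4 * ((4 : ℝ) ^ (n + 1)) ^ 4 := by ring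
    _ ≤ (n ! : ℝ) ^ 4 * (n + 1) * ((4 : ℝ) ^ (n + 1)) ^ 4 := by gcongr
    _ = _ := by ring

theorem lower_certificate :
    (2.18 * 8 * 3.141593 ^ 2 : ℝ) * ((quarterPochhammer 600 ^ 4 * (4 * 600 + 1) ^ 3 : ℕ) : ℝ)
      < (((600 ! * 4 ^ 600) ^ 4 * 64 : ℕ) : ℝ) := by
  rw [show (2.18 * 8 * 3.141593 ^ 2 : ℝ) = (218 * 8 * 3141593 ^ 2 : ℕ) / 10 ^ 14 by norm_num,
    div_mul_eq_mul_div, div_lt_iff₀ (by positivity)]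
  exact_mod_cast (by decide +kernel : 218 * 8 * 3141593 ^ 2 *
    (quarterPochhammer 600 ^ 4 * (4 * 600 + 1) ^ 3) < (600 ! * 4 ^ 600) ^ 4 * 64 * 10 ^ 14)

theorem upper_certificate :
    (((600 ! * 4 ^ (600 + 1)) ^ 4 * (600 + 1) : ℕ) : ℝ)
      < (2.19 * 8 * 3.141592 ^ 2 : ℝ) * ((quarterPochhammer (600 + 1) ^ 4 : ℕ) : ℝ) := by
  rw [show (2.19 * 8 * 3.141592 ^ 2 : ℝ) = (219 * 8 * 3141592 ^ 2 : ℕ) / 10 ^ 14 by norm_num,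
    div_mul_eq_mul_div, lt_div_iff₀ (by positivity)]
  exact_mod_cast (by decide +kernel : (600 ! * 4 ^ (600 + 1)) ^ 4 * (600 + 1) * 10 ^ 14 <
    219 * 8 * 3141592 ^ 2 * quarterPochhammer (600 + 1) ^ 4)

/-- The flux constant `F₀ := Γ(1/4)⁴/(8π²)` satisfies `2.18 < F₀ < 2.19`. -/
theorem stmt5 :
    2.18 < Real.Gamma (1/4)^4 / (8 * π^2) ∧ Real.Gamma (1/4)^4 / (8 * π^2) < 2.19 := by
  have hπ₀ := pi_gt_d6
  have hπ₁ := pi_lt_d6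
  have hlo : 2.18 * 8 * 3.141593 ^ 2 < Gamma (1 / 4) ^ 4 :=
    lt_of_mul_lt_mul_right (lower_certificate.trans_le (le_Gamma_one_div_four_pow_four_mul 600))
      (Nat.cast_nonneg _)
  have hhi : Gamma (1 / 4) ^ 4 < 2.19 * 8 * 3.141592 ^ 2 :=
    lt_of_mul_lt_mul_right ((Gamma_one_div_four_pow_four_mul_le 600).trans_lt upper_certificate)
      (Nat.cast_nonneg _)
  constructor
  · rw [lt_div_iff₀ (by positivity)]
    nlinarith
  · rw [div_lt_iff₀ (by positivity)]
    nlinarith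
end
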